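/- In the ring R = 𝔽₂[b₁, b₂, c₃, c₄, …][ρ, x₁, x₂, w]/(x₂² + x₁²b₁), the element x₁³w is a regular element (nonzerodivisor): for every r ∈ R, r·x₁³w = 0 implies r = 0. -/

import Mathlib

/-!
STATEMENT 15: In `R = 𝔽₂[b₁, b₂, c₃, c₄, …][ρ, x₁, x₂, w]/(x₂² + x₁²b₁)`, the element
`x₁³w` is a nonzerodivisor.

We model the ambient polynomial ring with variable set `ℕ ⊕ Fin 4` (`Sum.inl 0, 1 =
b₁, b₂`, `Sum.inl (k+2) = c_{k+3}`; `Sum.inr 0,…,3 = ρ, x₁, x₂, w`).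
-/

open MvPolynomial

set_option synthInstance.maxHeartbeats 1000000
set_option maxHeartbeats 1000000

noncomputable section

namespace Stmt15

abbrev P := MvPolynomial (ℕ ⊕ Fin 4) (ZMod 2)

def b₁ : P := X (Sum.inl 0)
def b₂ : P := X (Sum.inl 1)
def c (k : ℕ) : P := X (Sum.inl (k + 2))   -- `c k` is `c_{k+3}`
def ρ : P := X (Sum.inr 0)
def x₁ : P := X (Sum.inr 1)
def x₂ : P := X (Sum.inr 2)
def w : P := X (Sum.inr 3)

def J : Ideal P := Ideal.span {x₂ ^ 2 + x₁ ^ 2 * b₁}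

abbrev R := P ⧸ J

def mk : P →+* R := Ideal.Quotient.mk J

end Stmt15

/-!
Singling out the variable `x₂` identifies `R` with `A[x₂]/(x₂² + x₁²b₁)`, where `A` is the
polynomial ring in the remaining variables. The relation is monic in `x₂`, so `R` is a free
`A`-module (with basis `1, x₂`), hence torsion-free; multiplication by the nonzero element `x₁³w`
of the domain `A` is therefore injective on `R`.
-/

open scoped nonZeroDivisors

theorem AdjoinRoot.of_mem_nonZeroDivisors {A : Type*} [CommRing A] {f : Polynomial A}
    (hf : f.Monic) {m : A} (hm : m ∈ A⁰) : AdjoinRoot.of f m ∈ (AdjoinRoot f)⁰ := by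
  have := (AdjoinRoot.powerBasis' hf).basis.isTorsionFree
  rw [← isRegular_iff_mem_nonZeroDivisors] at hm ⊢
  refine (Commute.isRegular_iff (Commute.all _)).mpr fun x y hxy ↦ hm.isSMulRegular ?_
  simpa only [Algebra.smul_def, AdjoinRoot.algebraMap_eq] using hxy

namespace MvPolynomial

section CommSemiring

variable (R : Type*) {σ : Type*} [CommSemiring R] [DecidableEq σ]

def polynomialEquivOfVar (i : σ) :
    MvPolynomial σ R ≃ₐ[R] Polynomial (MvPolynomial {j // j ≠ i} R) :=
  (renameEquiv R (Equiv.optionSubtypeNe i).symm).trans (optionEquivLeft R _)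

@[simp] theorem polynomialEquivOfVar_X_self (i : σ) :
    polynomialEquivOfVar R i (X i) = Polynomial.X := by
  simp [polynomialEquivOfVar]

@[simp] theorem polynomialEquivOfVar_X_of_ne {i j : σ} (h : j ≠ i) :
    polynomialEquivOfVar R i (X j) = Polynomial.C (X ⟨j, h⟩) := by
  simp [polynomialEquivOfVar, Equiv.optionSubtypeNe_symm_of_ne h]

end CommSemiring

section CommRing

variable {R : Type*} {σ : Type*} [CommRing R] [DecidableEq σ]

def quotientSpanEquivAdjoinRoot (i : σ) (p : MvPolynomial σ R) :
    MvPolynomial σ R ⧸ Ideal.span {p} ≃+* AdjoinRoot (polynomialEquivOfVar R i p) :=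
  Ideal.quotientEquiv _ _ (polynomialEquivOfVar R i)
    (by rw [Ideal.map_span, Set.image_singleton]; rfl)

@[simp] theorem quotientSpanEquivAdjoinRoot_mk (i : σ) (p q : MvPolynomial σ R) :
    quotientSpanEquivAdjoinRoot i p (Ideal.Quotient.mk _ q) =
      AdjoinRoot.mk _ (polynomialEquivOfVar R i q) :=
  rfl

end CommRing

end MvPolynomial

namespace Stmt15

theorem polynomialEquivOfVar_relation :
    polynomialEquivOfVar (ZMod 2) (Sum.inr 2) (x₂ ^ 2 + x₁ ^ 2 * b₁) =
      Polynomial.X ^ 2 +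
        Polynomial.C (X ⟨Sum.inr 1, by decide⟩ ^ 2 * X ⟨Sum.inl 0, by simp⟩) := by
  simp [x₂, x₁, b₁]

theorem monic_polynomialEquivOfVar_relation :
    (polynomialEquivOfVar (ZMod 2) (Sum.inr 2) (x₂ ^ 2 + x₁ ^ 2 * b₁)).Monic := by
  rw [polynomialEquivOfVar_relation]
  exact Polynomial.monic_X_pow_add_C _ two_ne_zero

theorem polynomialEquivOfVar_x₁_pow_mul_w :
    polynomialEquivOfVar (ZMod 2) (Sum.inr 2) (x₁ ^ 3 * w) =
      Polynomial.C (X ⟨Sum.inr 1, by decide⟩ ^ 3 * X ⟨Sum.inr 3, by decide⟩) := by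
  simp [x₁, w]

theorem mk_x₁_pow_mul_w_mem_nonZeroDivisors : mk (x₁ ^ 3 * w) ∈ R⁰ := by
  have hm : X ⟨Sum.inr 1, by decide⟩ ^ 3 * X ⟨Sum.inr 3, by decide⟩ ∈
      (MvPolynomial {j : ℕ ⊕ Fin 4 // j ≠ Sum.inr 2} (ZMod 2))⁰ :=
    mem_nonZeroDivisors_of_ne_zero (mul_ne_zero (pow_ne_zero 3 (X_ne_zero _)) (X_ne_zero _))
  have hreg := AdjoinRoot.of_mem_nonZeroDivisors monic_polynomialEquivOfVar_relation hm
  rw [← AdjoinRoot.mk_C, ← polynomialEquivOfVar_x₁_pow_mul_w,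
    ← quotientSpanEquivAdjoinRoot_mk (Sum.inr 2),
    ← MulEquivClass.map_nonZeroDivisors (quotientSpanEquivAdjoinRoot _ _)] at hreg
  obtain ⟨y, hy, hy_eq⟩ := hreg
  exact (quotientSpanEquivAdjoinRoot _ _).injective hy_eq ▸ hy

theorem stmt_15 :
    ∀ r : R, r * mk (x₁ ^ 3 * w) = 0 → r = 0 :=
  (mem_nonZeroDivisors_iff.mp mk_x₁_pow_mul_w_mem_nonZeroDivisors).2

end Stmt15

end
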